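/- arXiv:2602.09152 — 4 statements merged into one kernel-verified Lean document; each statement's English description precedes it below -/
import Mathlib

section
/- Let B₊, B₋ be 2×2 complex matrices with B₊ = -B₋ᴴ (up to conjugating the spectral parameter) and B₊ + B₋ = 2J where J = [[0,-1],[1,0]]. If both B₊ and B₋ have rank 1, then ran B₊ ∩ ran B₋ = {0}. -/
open Matrix

def Jmat : Matrix (Fin 2) (Fin 2) ℂ := !![0, -1; 1, 0]

theorem ran_inter_trivial (Bp Bm : Matrix (Fin 2) (Fin 2) ℂ)
    (hadj : Bp = -Bm.conjTranspose)
    (hsum : Bp + Bm = (2 : ℂ) • Jmat)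
    (hrp : Bp.rank = 1) (hrm : Bm.rank = 1)
    (v : Fin 2 → ℂ)
    (hvp : ∃ x, Bp.mulVec x = v) (hvm : ∃ y, Bm.mulVec y = v) : v = 0 := by
  obtain ⟨x, hx⟩ := hvp
  obtain ⟨y, hy⟩ := hvm
  have detP : Bp.det = 0 := by
    by_contra h
    have : Bp.rank = Fintype.card (Fin 2) :=
      Bp.rank_of_isUnit ((Matrix.isUnit_iff_isUnit_det Bp).mpr (isUnit_iff_ne_zero.mpr h))
    simp [hrp] at this
  have detM : Bm.det = 0 := by
    by_contra h
    have : Bm.rank = Fintype.card (Fin 2) :=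
      Bm.rank_of_isUnit ((Matrix.isUnit_iff_isUnit_det Bm).mpr (isUnit_iff_ne_zero.mpr h))
    simp [hrm] at this
  have hx0 := congrFun hx 0
  have hx1 := congrFun hx 1
  have hy0 := congrFun hy 0
  have hy1 := congrFun hy 1
  simp [Matrix.mulVec, dotProduct, Fin.sum_univ_two] at hx0 hx1 hy0 hy1
  have s00 := congrFun (congrFun hsum 0) 0
  have s01 := congrFun (congrFun hsum 0) 1
  have s10 := congrFun (congrFun hsum 1) 0
  have s11 := congrFun (congrFun hsum 1) 1
  simp [Jmat] at s00 s01 s10 s11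
  rw [Matrix.det_fin_two] at detP detM
  funext i
  fin_cases i
  · show v 0 = 0
    linear_combination (-(Bm 1 0)/2) * hy0 + (Bm 0 0/2) * hy1 + (-(y 1)/2) * detM
      + (-(Bp 1 0)/2) * hx0 + (Bp 0 0/2) * hx1 + (-(x 1)/2) * detP
      + (-(v 0)/2) * s10 + (v 1/2) * s00
  · show v 1 = 0
    linear_combination (-(Bm 1 1)/2) * hy0 + (Bm 0 1/2) * hy1 + (y 0/2) * detM
      + (-(Bp 1 1)/2) * hx0 + (Bp 0 1/2) * hx1 + (x 0/2) * detP
      + (-(v 0)/2) * s11 + (v 1/2) * s01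
end

section
/- A 2×2 complex matrix S satisfies SᴴJS = J (i.e., S is symplectic), where J = [[0,-1],[1,0]], if and only if S = αR where α is a complex number of modulus 1 and R is a real 2×2 matrix with determinant 1. -/
open Matrix

theorem symplectic_iff (S : Matrix (Fin 2) (Fin 2) ℂ) :
    S.conjTranspose * Jmat * S = Jmat ↔
      ∃ (α : ℂ) (R : Matrix (Fin 2) (Fin 2) ℝ),
        ‖α‖ = 1 ∧ R.det = 1 ∧ S = α • R.map (fun x => (x : ℂ)) := by
  constructor
  · intro h
    have h00 := congrFun (congrFun h 0) 0
    have h01 := congrFun (congrFun h 0) 1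
    have h10 := congrFun (congrFun h 1) 0
    have h11 := congrFun (congrFun h 1) 1
    simp [Jmat, mul_apply, conjTranspose_apply, Fin.sum_univ_two] at h00 h01 h10 h11
    set a := S 0 0 with ha'
    set b := S 0 1 with hb'
    set c := S 1 0 with hc'
    set d := S 1 1 with hd'
    set δ : ℂ := a * d - b * c with hδdef
    have ea : a = δ * (starRingEnd ℂ) a := by
      rw [hδdef]; linear_combination a * h01 - b * h00
    have eb : b = δ * (starRingEnd ℂ) b := by
      rw [hδdef]; linear_combination a * h11 - b * h10
    have ec : c = δ * (starRingEnd ℂ) c := by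
      rw [hδdef]; linear_combination c * h01 - d * h00
    have ed : d = δ * (starRingEnd ℂ) d := by
      rw [hδdef]; linear_combination c * h11 - d * h10
    have hδ1 : δ * (starRingEnd ℂ) δ = 1 := by
      have hcd : (starRingEnd ℂ) δ = (starRingEnd ℂ) a * (starRingEnd ℂ) d
          - (starRingEnd ℂ) b * (starRingEnd ℂ) c := by
        rw [hδdef]; simp only [map_sub, _root_.map_mul]
      rw [hcd]
      linear_combination (- (starRingEnd ℂ) d) * ea + (starRingEnd ℂ) b * ec + h10
    obtain ⟨α, hα2⟩ := IsAlgClosed.exists_pow_nat_eq δ (n := 2) (by norm_num)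
    have hnδ : Complex.normSq δ = 1 := by
      have := Complex.mul_conj δ
      rw [hδ1] at this
      exact_mod_cast this.symm
    have hnα : Complex.normSq α = 1 := by
      have h2 : Complex.normSq α ^ 2 = 1 := by
        have : Complex.normSq (α ^ 2) = 1 := by rw [hα2, hnδ]
        simpa [map_pow] using this
      nlinarith [Complex.normSq_nonneg α]
    have hαc : α * (starRingEnd ℂ) α = 1 := by
      rw [Complex.mul_conj, hnα]; norm_num
    have key : ∀ z : ℂ, z = δ * (starRingEnd ℂ) z →
        (((starRingEnd ℂ) α * z).re : ℂ) = (starRingEnd ℂ) α * z := by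
      intro z hz
      rw [← Complex.conj_eq_iff_re]
      simp only [_root_.map_mul, Complex.conj_conj]
      linear_combination (- (starRingEnd ℂ) α) * hz
        + (- (starRingEnd ℂ) z * α) * hαc
        + ((starRingEnd ℂ) α * (starRingEnd ℂ) z) * hα2
    refine ⟨α, !![((starRingEnd ℂ) α * a).re, ((starRingEnd ℂ) α * b).re;
        ((starRingEnd ℂ) α * c).re, ((starRingEnd ℂ) α * d).re], ?_, ?_, ?_⟩
    · rw [← Complex.sq_norm] at hnα
      nlinarith [norm_nonneg α]
    · have hc1 : ((!![((starRingEnd ℂ) α * a).re, ((starRingEnd ℂ) α * b).re;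
          ((starRingEnd ℂ) α * c).re, ((starRingEnd ℂ) α * d).re] :
            Matrix (Fin 2) (Fin 2) ℝ).det : ℂ) = 1 := by
        rw [Matrix.det_fin_two_of]
        push_cast
        rw [key a ea, key b eb, key c ec, key d ed]
        linear_combination (- (starRingEnd ℂ) α * (starRingEnd ℂ) α) * hδdef
          + (- (starRingEnd ℂ) α * (starRingEnd ℂ) α) * hα2
          + (α * (starRingEnd ℂ) α + 1) * hαc
      exact_mod_cast hc1
    · ext i j
      fin_cases i <;> fin_cases j <;>
        simp only [Matrix.smul_apply, map_apply, of_apply, cons_val', cons_val_zero, cons_val_one,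
          head_cons, head_fin_const, empty_val', cons_val_fin_one, smul_eq_mul, Fin.zero_eta,
          Fin.mk_one, Fin.isValue] <;>
        [rw [key a ea]; rw [key b eb]; rw [key c ec]; rw [key d ed]] <;>
        [linear_combination (-a) * hαc; linear_combination (-b) * hαc;
         linear_combination (-c) * hαc; linear_combination (-d) * hαc]
  · rintro ⟨α, R, hα, hR, rfl⟩
    have hαc : (starRingEnd ℂ) α * α = 1 := by
      rw [mul_comm, Complex.mul_conj, ← Complex.sq_norm, hα]; norm_num
    have hRC : ((R 0 0 : ℂ)) * (R 1 1 : ℂ) - (R 0 1 : ℂ) * (R 1 0 : ℂ) = 1 := by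
      rw [Matrix.det_fin_two] at hR
      exact_mod_cast congrArg (fun x : ℝ => (x : ℂ)) hR
    ext i j
    fin_cases i <;> fin_cases j <;>
      simp [Jmat, mul_apply, conjTranspose_apply, Fin.sum_univ_two, _root_.map_mul,
        Complex.conj_ofReal] <;>
      [ring;
       linear_combination ((R 1 0 : ℂ) * (R 0 1 : ℂ) - (R 0 0 : ℂ) * (R 1 1 : ℂ)) * hαc - hRC;
       linear_combination ((R 0 0 : ℂ) * (R 1 1 : ℂ) - (R 0 1 : ℂ) * (R 1 0 : ℂ)) * hαc + hRC;
       ring]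
end

section
/- Let S be a symmetric linear relation in a Hilbert space H bounded below by α ∈ ℝ. Then the sesquilinear form on dom S defined by ⟨⟨u,v⟩⟩ = ⟨f,v⟩ + (1-α)⟨u,v⟩, where (u,f) ∈ S, is well-defined (independent of the choice of f) and is an inner product on dom S; in particular ⟨⟨u,u⟩⟩ ≥ ‖u‖² for all u ∈ dom S. -/
open scoped InnerProductSpace

theorem form_inner_product_well_defined
    {H : Type*} [NormedAddCommGroup H] [InnerProductSpace ℂ H]
    (S : Submodule ℂ (H × H)) (α : ℝ)
    (hsym : ∀ p ∈ S, ∀ q ∈ S, (inner ℂ q.2 p.1 : ℂ) = inner ℂ q.1 p.2)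
    (hbd : ∀ p ∈ S, α * ‖p.1‖ ^ 2 ≤ (inner ℂ p.2 p.1 : ℂ).re) :
    (∀ u f f' v, (u, f) ∈ S → (u, f') ∈ S → (∃ g, (v, g) ∈ S) →
      (inner ℂ f v : ℂ) + (1 - (α : ℂ)) * inner ℂ u v
        = (inner ℂ f' v : ℂ) + (1 - (α : ℂ)) * inner ℂ u v) ∧
    (∀ u f, (u, f) ∈ S →
      ‖u‖ ^ 2 ≤ ((inner ℂ f u : ℂ) + (1 - (α : ℂ)) * inner ℂ u u).re) := by
  constructor
  · intro u f f' v huf huf' ⟨g, hvg⟩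
    have hdiff : ((u, f) - (u, f') : H × H) ∈ S := S.sub_mem huf huf'
    have h0 : ((0 : H), f - f') ∈ S := by
      simpa [Prod.sub_def] using hdiff
    have := hsym (v, g) hvg ((0 : H), f - f') h0
    simp only [inner_zero_left] at this
    have h : (inner ℂ (f - f') v : ℂ) = 0 := this
    rw [inner_sub_left, sub_eq_zero] at h
    rw [h]
  · intro u f huf
    have h1 := hbd (u, f) huf
    have h2 : ((1 - (α : ℂ)) * inner ℂ u u).re = (1 - α) * ‖u‖ ^ 2 := by
      have him : (inner ℂ u u : ℂ).im = 0 := inner_self_im (𝕜 := ℂ) u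
      have hre : (inner ℂ u u : ℂ).re = ‖u‖ ^ 2 := inner_self_eq_norm_sq (𝕜 := ℂ) u
      rw [Complex.mul_re, him, hre]; simp
    rw [Complex.add_re, h2]
    nlinarith [sq_nonneg ‖u‖]
end

section
/- Let R : H → H be a bounded linear operator on a Hilbert space H such that ⟨Ru, v⟩ = ⟨u, Rv⟩ for all u,v ∈ H and ⟨u, Ru⟩ ≥ 0 for all u. Then the linear relation T = R⁻¹ + (α-1)·id := {(Rv, v + (α-1)Rv) : v ∈ H} is self-adjoint as a linear relation in H × H. -/
open scoped InnerProductSpace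

/-- The adjoint of a linear relation. -/
def relAdjoint {H : Type*} [NormedAddCommGroup H] [InnerProductSpace ℂ H]
    (T : Set (H × H)) : Set (H × H) :=
  {p | ∀ q ∈ T, (inner ℂ p.2 q.1 : ℂ) = inner ℂ p.1 q.2}

theorem inverse_shift_selfadjoint
    {H : Type*} [NormedAddCommGroup H] [InnerProductSpace ℂ H] [CompleteSpace H]
    (R : H →L[ℂ] H)
    (hsa : ∀ u v : H, (inner ℂ (R u) v : ℂ) = inner ℂ u (R v))
    (hpos : ∀ u : H, 0 ≤ (inner ℂ u (R u) : ℂ).re) (α : ℝ) :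
    {p : H × H | ∃ v : H, p = (R v, v + ((α : ℂ) - 1) • R v)}
      = relAdjoint {p : H × H | ∃ v : H, p = (R v, v + ((α : ℂ) - 1) • R v)} := by
  have hconj : (starRingEnd ℂ) ((α : ℂ) - 1) = (α : ℂ) - 1 := by
    simp [map_sub, Complex.conj_ofReal]
  ext p
  constructor
  · rintro ⟨w, rfl⟩
    rintro q ⟨u, rfl⟩
    simp only [inner_add_left, inner_add_right, inner_smul_left, inner_smul_right, hconj]
    rw [hsa w u]
  · intro hp
    obtain ⟨v, g⟩ := p
    set u := g - ((α : ℂ) - 1) • v with hu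
    have key : ∀ w : H, (inner ℂ (R u) w : ℂ) = inner ℂ v w := by
      intro w
      have h' := hp (R w, w + ((α : ℂ) - 1) • R w) ⟨w, rfl⟩
      simp only [inner_add_right, inner_smul_right] at h'
      rw [hsa u w, hu, inner_sub_left, inner_smul_left, hconj]
      rw [h']
      ring
    have hv : R u = v := ext_inner_right ℂ key
    refine ⟨u, ?_⟩
    rw [hv, hu]
    ext <;> simp <;> abel
end
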